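/- Let k be a field and q ∈ k a primitive n-th root of unity with n ≥ 2. Then the Gaussian binomial coefficient (n choose i)_q vanishes in k for all i with 0 < i < n. -/

import Mathlib

/-- The Gaussian binomial coefficient `(n choose i)_q`, defined by the q-Pascal recursion. -/
def gaussBinom {R : Type*} [CommRing R] (q : R) : ℕ → ℕ → R
  | _, 0 => 1
  | 0, _ + 1 => 0
  | n + 1, i + 1 => gaussBinom q n i + q ^ (i + 1) * gaussBinom q n (i + 1)

/-- q-integer `[m]_q = 1 + q + ... + q^(m-1)`. -/
def qInt {R : Type*} [CommRing R] (q : R) (m : ℕ) : R :=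
  ∑ j ∈ Finset.range m, q ^ j

/-- q-factorial. -/
def qFact {R : Type*} [CommRing R] (q : R) : ℕ → R
  | 0 => 1
  | m + 1 => qInt q (m + 1) * qFact q m

lemma qInt_add {R : Type*} [CommRing R] (q : R) (a b : ℕ) :
    qInt q (a + b) = qInt q a + q ^ a * qInt q b := by
  simp only [qInt, Finset.sum_range_add, pow_add, Finset.mul_sum]

lemma gaussBinom_of_lt {R : Type*} [CommRing R] (q : R) :
    ∀ n i, n < i → gaussBinom q n i = 0 := by
  intro n
  induction n with
  | zero => intro i hi; match i, hi with
            | i + 1, _ => rfl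
  | succ n ih =>
      intro i hi
      match i, hi with
      | i + 1, hi =>
        have h1 : n < i := Nat.lt_of_succ_lt_succ hi
        have h2 : n < i + 1 := Nat.lt_succ_of_lt h1
        show gaussBinom q n i + q ^ (i + 1) * gaussBinom q n (i + 1) = 0
        rw [ih i h1, ih (i + 1) h2, mul_zero, add_zero]

lemma gaussBinom_self {R : Type*} [CommRing R] (q : R) (n : ℕ) :
    gaussBinom q n n = 1 := by
  induction n with
  | zero => rfl
  | succ n ih =>
      show gaussBinom q n n + q ^ (n + 1) * gaussBinom q n (n + 1) = 1
      rw [ih, gaussBinom_of_lt q n (n + 1) (Nat.lt_succ_self n), mul_zero, add_zero]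

lemma gaussBinom_key {R : Type*} [CommRing R] (q : R) :
    ∀ n i, i ≤ n → gaussBinom q n i * (qFact q i * qFact q (n - i)) = qFact q n := by
  intro n
  induction n with
  | zero =>
      intro i hi
      interval_cases i
      simp [gaussBinom, qFact]
  | succ n ih =>
      intro i hi
      match i with
      | 0 => simp [gaussBinom, qFact]
      | j + 1 =>
        show (gaussBinom q n j + q ^ (j + 1) * gaussBinom q n (j + 1)) *
            (qFact q (j + 1) * qFact q (n + 1 - (j + 1))) = qFact q (n + 1)
        rcases Nat.lt_or_ge j n with hj | hj
        · have hjn : j ≤ n := le_of_lt hj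
          have hj1n : j + 1 ≤ n := hj
          obtain ⟨m, hm⟩ : ∃ m, n - j = m + 1 := ⟨n - j - 1, by omega⟩
          have ihj := ih j hjn
          have ihj1 := ih (j + 1) hj1n
          have hsplit : qInt q (j + 1) + q ^ (j + 1) * qInt q (n - j) = qInt q (n + 1) := by
            have := qInt_add q (j + 1) (n - j)
            rw [show j + 1 + (n - j) = n + 1 by omega] at this
            rw [this]
          rw [hm] at ihj hsplit
          rw [show n - (j + 1) = m by omega] at ihj1
          calc (gaussBinom q n j + q ^ (j + 1) * gaussBinom q n (j + 1)) *
                (qFact q (j + 1) * qFact q (n + 1 - (j + 1)))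
              = qInt q (j + 1) * (gaussBinom q n j * (qFact q j * qFact q (m + 1)))
                + q ^ (j + 1) * qInt q (m + 1) *
                  (gaussBinom q n (j + 1) * (qFact q (j + 1) * qFact q m)) := by
                rw [show n + 1 - (j + 1) = m + 1 by omega]
                rw [show qFact q (m + 1) = qInt q (m + 1) * qFact q m from rfl]
                rw [show qFact q (j + 1) = qInt q (j + 1) * qFact q j from rfl]
                ring
            _ = qInt q (j + 1) * qFact q n + q ^ (j + 1) * qInt q (m + 1) * qFact q n := by
                rw [ihj, ihj1]
            _ = qInt q (n + 1) * qFact q n := by rw [← hsplit]; ring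
            _ = qFact q (n + 1) := rfl
        · have hje : j = n := by omega
          subst hje
          rw [gaussBinom_of_lt q j (j + 1) (Nat.lt_succ_self j), mul_zero, add_zero,
            gaussBinom_self, one_mul, Nat.sub_self]
          show qFact q (j + 1) * 1 = qFact q (j + 1)
          rw [mul_one]

/-- If `q ∈ k` is a primitive `n`-th root of unity (`n ≥ 2`) in a field `k`, then the
Gaussian binomial coefficient `(n choose i)_q` vanishes for all `0 < i < n`. -/
theorem gaussBinom_eq_zero_of_primitiveRoot {k : Type*} [Field k]
    (q : k) (n : ℕ) (hn : 2 ≤ n) (hq : IsPrimitiveRoot q n)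
    (i : ℕ) (h0 : 0 < i) (h1 : i < n) :
    gaussBinom q n i = 0 := by
  have hq1 : q - 1 ≠ 0 := by
    intro h
    have : q = 1 := by linear_combination h
    exact hq.ne_one (by omega) this
  -- qInt q m ≠ 0 for 0 < m < n
  have hqInt_ne : ∀ m, 0 < m → m < n → qInt q m ≠ 0 := by
    intro m hm0 hmn h
    have hgs : (∑ j ∈ Finset.range m, q ^ j) * (q - 1) = q ^ m - 1 := geom_sum_mul q m
    rw [show (∑ j ∈ Finset.range m, q ^ j) = qInt q m from rfl, h, zero_mul] at hgs
    have : q ^ m = 1 := by linear_combination -hgs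
    exact hq.pow_ne_one_of_pos_of_lt hm0.ne' hmn this
  have hqFact_ne : ∀ m, m < n → qFact q m ≠ 0 := by
    intro m
    induction m with
    | zero => intro _; simp [qFact]
    | succ m ih =>
        intro hmn
        show qInt q (m + 1) * qFact q m ≠ 0
        exact mul_ne_zero (hqInt_ne (m + 1) (Nat.succ_pos m) hmn) (ih (by omega))
  have hqIntn : qInt q n = 0 := by
    have hgs : (∑ j ∈ Finset.range n, q ^ j) * (q - 1) = q ^ n - 1 := geom_sum_mul q n
    rw [hq.pow_eq_one, sub_self] at hgs
    exact (mul_eq_zero.mp hgs).resolve_right hq1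
  have hqFactn : qFact q n = 0 := by
    obtain ⟨m, rfl⟩ : ∃ m, n = m + 1 := ⟨n - 1, by omega⟩
    show qInt q (m + 1) * qFact q m = 0
    rw [hqIntn, zero_mul]
  have key := gaussBinom_key q n i (le_of_lt h1)
  rw [hqFactn] at key
  have hne : qFact q i * qFact q (n - i) ≠ 0 :=
    mul_ne_zero (hqFact_ne i h1) (hqFact_ne (n - i) (by omega))
  exact (mul_eq_zero.mp key).resolve_right hne
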